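/- Let μ_1, …, μ_m be Borel probability measures on ℝ^d, each supported on the closed unit ball {φ : ‖φ‖ ≤ 1}. For i = 1, …, m define the real d×d matrix Σ_i = 2I + Σ_{j=1}^{i−1} ∫ φφᵀ dμ_j(φ). Then Σ_{i=1}^m ∫ √( φᵀ Σ_i^{-1} φ ) dμ_i(φ) ≤ √( 2·m·d·log(1 + m/d) ); in particular, min_{1 ≤ i ≤ m} ∫ √( φᵀ Σ_i^{-1} φ ) dμ_i(φ) ≤ √( 2·d·log(1 + m/d)/m ). -/

import Mathlib

/-
Write `Mᵢ = ∫ φφᵀ dμᵢ` and `tᵢ = tr(Σᵢ⁻¹ Mᵢ) = ∫ φᵀΣᵢ⁻¹φ dμᵢ`. Jensen bounds the `i`-th integral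
by `√tᵢ`, and Cauchy–Schwarz bounds `∑ √tᵢ` by `√(m ∑ tᵢ)`. Since `Σᵢ ≥ 2I` and `tr Mᵢ ≤ 1`, each
`tᵢ ≤ 1/2`. Writing `Σᵢ = BᵀB`, the matrix `N = B⁻ᵀ Mᵢ B⁻¹` is positive semidefinite with trace
`tᵢ` and `det Σᵢ₊₁ = det Σᵢ · det (1 + N)`, so applying `x ≤ 2 log (1 + x)` (valid on `[0, 1]`)
to the eigenvalues of `N` gives `tᵢ ≤ 2 (log det Σᵢ₊₁ - log det Σᵢ)`. The sum telescopes, and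
AM–GM on the eigenvalues of `Σₘ`, whose trace is at most `2d + m`, bounds
`log det Σₘ - log det Σ₀` by `d log (1 + m / 2d)`. The minimum is at most the mean.
-/

open Matrix MeasureTheory Finset

lemma Real.le_two_mul_log_one_add {x : ℝ} (h0 : 0 ≤ x) (h1 : x ≤ 1) :
    x ≤ 2 * Real.log (1 + x) := by
  have hlog := Real.one_sub_inv_le_log_of_pos (by linarith : 0 < 1 + x)
  have hx : x / 2 ≤ x / (1 + x) := div_le_div_of_nonneg_left h0 (by linarith) (by linarith)
  have : 1 - (1 + x)⁻¹ = x / (1 + x) := by field_simp; ring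
  linarith

lemma Real.sum_sqrt_le_sqrt_card_mul_sum {α : Type*} {s : Finset α} {f : α → ℝ}
    (hf : ∀ i ∈ s, 0 ≤ f i) : ∑ i ∈ s, √(f i) ≤ √(#s * ∑ i ∈ s, f i) := by
  have h := Real.sum_mul_le_sqrt_mul_sqrt s (fun i => √(f i)) fun _ => 1
  simp only [mul_one, one_pow, sum_const, nsmul_eq_mul] at h
  rwa [sum_congr rfl fun i hi => Real.sq_sqrt (hf i hi), ← Real.sqrt_mul', mul_comm] at h
  positivity

lemma exists_lt_le_sqrt_div_of_sum_range_le {f : ℕ → ℝ} {m : ℕ} (hm : 0 < m) {x : ℝ}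
    (h : ∑ i ∈ range m, f i ≤ √(m * x)) : ∃ i < m, f i ≤ √(x / m) := by
  have hmean : √(m * x) = ∑ _i ∈ range m, √(x / m) := by
    have : (0 : ℝ) < m := by exact_mod_cast hm
    rw [sum_const, card_range, nsmul_eq_mul, ← Real.sqrt_sq this.le, ← Real.sqrt_mul (sq_nonneg _),
      Real.sqrt_sq this.le]
    congr 1
    field_simp
  obtain ⟨i, hi, hle⟩ := exists_le_of_sum_le (nonempty_range_iff.mpr hm.ne') (h.trans_eq hmean)
  exact ⟨i, mem_range.mp hi, hle⟩

lemma integral_sqrt_le_sqrt_integral {α : Type*} [MeasurableSpace α] {ν : Measure α}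
    [IsProbabilityMeasure ν] {f : α → ℝ} (hf : Integrable f ν) (hf0 : 0 ≤ᵐ[ν] f) :
    ∫ x, √(f x) ∂ν ≤ √(∫ x, f x ∂ν) := by
  have hsqrt : Integrable (fun x => √(f x)) ν := by
    refine (hf.add (integrable_const 1)).mono'
      (Real.continuous_sqrt.comp_aestronglyMeasurable hf.1) ?_
    filter_upwards [hf0] with x (hx : 0 ≤ f x)
    rw [Real.norm_of_nonneg (Real.sqrt_nonneg _), Pi.add_apply, Real.sqrt_le_iff]
    constructor <;> nlinarith
  exact Real.strictConcaveOn_sqrt.concaveOn.le_map_integral Real.continuous_sqrt.continuousOn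
    isClosed_Ici hf0 hf hsqrt

variable {ι : Type*}

namespace Matrix

lemma posDef_of_posSemidef_sub_smul_one [DecidableEq ι] {A : Matrix ι ι ℝ} {c : ℝ} (hc : 0 < c)
    (hA : (A - c • 1).PosSemidef) : A.PosDef := by
  simpa using (PosDef.one.smul hc).add_posSemidef hA

lemma dotProduct_mulVec_self_eq_sum [Fintype ι] {R : Type*} [CommSemiring R] (A : Matrix ι ι R)
    (x : ι → R) : x ⬝ᵥ A *ᵥ x = ∑ a, ∑ b, A a b * (x b * x a) := by
  simp only [dotProduct, mulVec, mul_sum]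
  exact sum_congr rfl fun a _ => sum_congr rfl fun b _ => by ring

variable [Fintype ι] [DecidableEq ι]

lemma dotProduct_inv_mulVec_le {A : Matrix ι ι ℝ} {c : ℝ} (hc : 0 < c)
    (hA : (A - c • 1).PosSemidef) (x : ι → ℝ) : x ⬝ᵥ A⁻¹ *ᵥ x ≤ (x ⬝ᵥ x) / c := by
  set y := A⁻¹ *ᵥ x
  have hAy : A *ᵥ y = x := by
    have hdet := (posDef_of_posSemidef_sub_smul_one hc hA).det_pos.ne'.isUnit
    rw [mulVec_mulVec, mul_nonsing_inv _ hdet, one_mulVec]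
  have hcy : c * (y ⬝ᵥ y) ≤ x ⬝ᵥ y := by
    have := hA.dotProduct_mulVec_nonneg y
    rw [star_trivial, sub_mulVec, dotProduct_sub, smul_mulVec, one_mulVec, dotProduct_smul, hAy,
      dotProduct_comm y x, smul_eq_mul] at this
    linarith
  have hsq : 0 ≤ (x - c • y) ⬝ᵥ (x - c • y) := dotProduct_self_star_nonneg _
  simp only [sub_dotProduct, dotProduct_sub, smul_dotProduct, dotProduct_smul, smul_eq_mul,
    dotProduct_comm y x] at hsq
  rw [le_div_iff₀ hc]
  nlinarith [mul_le_mul_of_nonneg_left hcy hc.le]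

lemma trace_inv_mul_le_trace_div {A M : Matrix ι ι ℝ} {c : ℝ} (hc : 0 < c)
    (hA : (A - c • 1).PosSemidef) (hM : M.PosSemidef) : (A⁻¹ * M).trace ≤ M.trace / c := by
  obtain ⟨k, v, rfl⟩ := posSemidef_iff_eq_sum_vecMulVec.mp hM
  simp only [mul_sum, trace_sum, mul_vecMulVec, trace_vecMulVec, star_trivial, sum_div]
  gcongr with j
  rw [dotProduct_comm]
  exact dotProduct_inv_mulVec_le hc hA (v j)

lemma IsHermitian.det_one_add {A : Matrix ι ι ℝ} (hA : A.IsHermitian) :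
    (1 + A).det = ∏ i, (1 + hA.eigenvalues i) := by
  set U : Matrix ι ι ℝ := (hA.eigenvectorUnitary : Matrix ι ι ℝ)
  have hU : U * star U = 1 := mem_unitaryGroup_iff.mp hA.eigenvectorUnitary.2
  have key : 1 + A = U * (1 + diagonal hA.eigenvalues) * star U := by
    rw [mul_add, add_mul, mul_one, hU]
    conv_lhs => rw [hA.spectral_theorem, Unitary.conjStarAlgAut_apply]
    rfl
  rw [key, det_mul, det_mul, mul_right_comm, ← det_mul, hU, det_one, one_mul,
    ← diagonal_one, diagonal_add, det_diagonal]

lemma PosSemidef.trace_le_two_mul_log_det_one_add {N : Matrix ι ι ℝ} (hN : N.PosSemidef)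
    (h : N.trace ≤ 1) : N.trace ≤ 2 * Real.log (1 + N).det := by
  have hev := hN.eigenvalues_nonneg
  have htr : N.trace = ∑ i, hN.isHermitian.eigenvalues i := by
    simpa using hN.isHermitian.trace_eq_sum_eigenvalues
  rw [hN.isHermitian.det_one_add, Real.log_prod fun i _ => by linarith [hev i], mul_sum, htr]
  refine sum_le_sum fun i _ => Real.le_two_mul_log_one_add (hev i) ?_
  exact (single_le_sum (fun j _ => hev j) (mem_univ i)).trans (htr ▸ h)

open scoped MatrixOrder in
lemma PosDef.exists_posSemidef_det_add_eq {A M : Matrix ι ι ℝ} (hA : A.PosDef)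
    (hM : M.PosSemidef) : ∃ N : Matrix ι ι ℝ, N.PosSemidef ∧ N.trace = (A⁻¹ * M).trace ∧
      (A + M).det = A.det * (1 + N).det := by
  obtain ⟨B, rfl⟩ := CStarAlgebra.nonneg_iff_eq_star_mul_self.mp hA.posSemidef.nonneg
  have hB : IsUnit B.det := by
    refine (isUnit_iff_ne_zero).mpr fun h => hA.det_pos.ne' ?_
    rw [det_mul, h, mul_zero]
  refine ⟨(B⁻¹)ᴴ * M * B⁻¹, hM.conjTranspose_mul_mul_same _, ?_, ?_⟩
  · rw [trace_mul_cycle, star_eq_conjTranspose, mul_inv_rev, conjTranspose_nonsing_inv]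
  · have : star B * B + M = Bᴴ * (1 + (B⁻¹)ᴴ * M * B⁻¹) * B := by
      have hBB : Bᴴ * (B⁻¹)ᴴ = 1 := by
        rw [← conjTranspose_mul, nonsing_inv_mul _ hB, conjTranspose_one]
      rw [mul_add, add_mul, mul_one, star_eq_conjTranspose]
      simp only [← mul_assoc, hBB, one_mul]
      rw [mul_assoc, nonsing_inv_mul _ hB, mul_one]
    rw [this, det_mul, det_mul, det_mul, star_eq_conjTranspose]
    ring

lemma PosDef.trace_inv_mul_nonneg {A M : Matrix ι ι ℝ} (hA : A.PosDef) (hM : M.PosSemidef) :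
    0 ≤ (A⁻¹ * M).trace := by
  obtain ⟨N, hN, htr, -⟩ := hA.exists_posSemidef_det_add_eq hM
  exact htr ▸ hN.trace_nonneg

lemma PosDef.trace_inv_mul_le_two_mul_log_det_add {A M : Matrix ι ι ℝ} (hA : A.PosDef)
    (hM : M.PosSemidef) (h : (A⁻¹ * M).trace ≤ 1) :
    (A⁻¹ * M).trace ≤ 2 * (Real.log (A + M).det - Real.log A.det) := by
  obtain ⟨N, hN, htr, hdet⟩ := hA.exists_posSemidef_det_add_eq hM
  rw [hdet, Real.log_mul hA.det_pos.ne' (PosDef.one.add_posSemidef hN).det_pos.ne', ← htr]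
  simpa using hN.trace_le_two_mul_log_det_one_add (htr ▸ h)

lemma PosDef.log_det_le [Nonempty ι] {A : Matrix ι ι ℝ} (hA : A.PosDef) :
    Real.log A.det ≤ Fintype.card ι * Real.log (A.trace / Fintype.card ι) := by
  set n : ℝ := (Fintype.card ι : ℝ)
  have hn : 0 < n := by positivity
  have hev := hA.eigenvalues_pos
  have htr : A.trace = ∑ i, hA.isHermitian.eigenvalues i := by
    simpa using hA.isHermitian.trace_eq_sum_eigenvalues
  have hdet : A.det = ∏ i, hA.isHermitian.eigenvalues i := by
    simpa using hA.isHermitian.det_eq_prod_eigenvalues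
  have jensen := strictConcaveOn_log_Ioi.concaveOn.le_map_sum (t := univ)
    (w := fun _ => n⁻¹) (p := hA.isHermitian.eigenvalues) (fun _ _ => by positivity)
    (by simp [n, hn.ne']) (fun i _ => hev i)
  rw [hdet, Real.log_prod fun i _ => (hev i).ne']
  calc ∑ i, Real.log (hA.isHermitian.eigenvalues i)
      = n * ∑ i, n⁻¹ • Real.log (hA.isHermitian.eigenvalues i) := by
        rw [← smul_sum, smul_eq_mul, mul_inv_cancel_left₀ hn.ne']
    _ ≤ n * Real.log (∑ i, n⁻¹ • hA.isHermitian.eigenvalues i) := by gcongr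
    _ = n * Real.log (A.trace / n) := by rw [← smul_sum, htr, smul_eq_mul, inv_mul_eq_div]

end Matrix

section DesignMatrix

variable [DecidableEq ι] {c : ℝ} {M : ℕ → Matrix ι ι ℝ}

def designMatrix (c : ℝ) (M : ℕ → Matrix ι ι ℝ) (i : ℕ) : Matrix ι ι ℝ :=
  c • 1 + ∑ j ∈ range i, M j

lemma designMatrix_succ (i : ℕ) : designMatrix c M (i + 1) = designMatrix c M i + M i := by
  rw [designMatrix, designMatrix, sum_range_succ, add_assoc]

lemma posSemidef_designMatrix_sub_smul_one {i : ℕ} (hM : ∀ j < i, (M j).PosSemidef) :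
    (designMatrix c M i - c • 1).PosSemidef := by
  rw [designMatrix, add_sub_cancel_left]
  exact posSemidef_sum _ fun j hj => hM j (mem_range.mp hj)

lemma posDef_designMatrix (hc : 0 < c) {i : ℕ} (hM : ∀ j < i, (M j).PosSemidef) :
    (designMatrix c M i).PosDef :=
  posDef_of_posSemidef_sub_smul_one hc (posSemidef_designMatrix_sub_smul_one hM)

variable [Fintype ι]

lemma trace_designMatrix (i : ℕ) :
    (designMatrix c M i).trace = c * Fintype.card ι + ∑ j ∈ range i, (M j).trace := by
  rw [designMatrix, trace_add, trace_smul, trace_one, trace_sum, smul_eq_mul]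

lemma log_det_designMatrix_le [Nonempty ι] (hc : 0 < c) {m : ℕ}
    (hM : ∀ j < m, (M j).PosSemidef) (htr : ∀ j < m, (M j).trace ≤ 1) :
    Real.log (designMatrix c M m).det ≤
      Fintype.card ι * (Real.log c + Real.log (1 + m / (c * Fintype.card ι))) := by
  set n : ℝ := (Fintype.card ι : ℝ)
  have hn : 0 < n := by positivity
  have hPD := posDef_designMatrix hc hM
  have htrace : (designMatrix c M m).trace / n ≤ c * (1 + m / (c * n)) := by
    rw [div_le_iff₀ hn, trace_designMatrix]
    have : ∑ j ∈ range m, (M j).trace ≤ m := by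
      simpa using sum_le_sum fun j hj => htr j (mem_range.mp hj)
    field_simp
    linarith
  calc Real.log (designMatrix c M m).det
      ≤ n * Real.log ((designMatrix c M m).trace / n) := hPD.log_det_le
    _ ≤ n * Real.log (c * (1 + m / (c * n))) := by
        gcongr
        exact div_pos (hPD.trace_pos) hn
    _ = n * (Real.log c + Real.log (1 + m / (c * n))) := by
        rw [Real.log_mul hc.ne' (by positivity)]

theorem sum_trace_inv_designMatrix_mul_le [Nonempty ι] (hc : 1 ≤ c) {m : ℕ}
    (hM : ∀ j < m, (M j).PosSemidef) (htr : ∀ j < m, (M j).trace ≤ 1) :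
    ∑ i ∈ range m, ((designMatrix c M i)⁻¹ * M i).trace ≤
      2 * Fintype.card ι * Real.log (1 + m / (c * Fintype.card ι)) := by
  have hc0 : 0 < c := one_pos.trans_le hc
  set L : ℕ → ℝ := fun i => Real.log (designMatrix c M i).det
  have hstep : ∀ i < m, ((designMatrix c M i)⁻¹ * M i).trace ≤ 2 * (L (i + 1) - L i) := by
    intro i hi
    have hsub := posSemidef_designMatrix_sub_smul_one (c := c) fun j hj => hM j (hj.trans hi)
    have hle : ((designMatrix c M i)⁻¹ * M i).trace ≤ 1 :=
      (trace_inv_mul_le_trace_div hc0 hsub (hM i hi)).trans <|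
        div_le_one_of_le₀ ((htr i hi).trans hc) hc0.le
    simpa only [L, designMatrix_succ] using
      (posDef_designMatrix hc0 fun j hj => hM j (hj.trans hi)).trace_inv_mul_le_two_mul_log_det_add
        (hM i hi) hle
  have hL0 : L 0 = Fintype.card ι * Real.log c := by
    simp [L, designMatrix, Real.log_pow]
  calc ∑ i ∈ range m, ((designMatrix c M i)⁻¹ * M i).trace
      ≤ ∑ i ∈ range m, 2 * (L (i + 1) - L i) :=
        sum_le_sum fun i hi => hstep i (mem_range.mp hi)
    _ = 2 * (L m - L 0) := by rw [← mul_sum, sum_range_sub]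
    _ ≤ 2 * Fintype.card ι * Real.log (1 + m / (c * Fintype.card ι)) := by
        have := log_det_designMatrix_le hc0 hM htr
        simp only [L] at hL0 ⊢
        linarith

end DesignMatrix

section SecondMoment

variable [Fintype ι]

noncomputable def secondMoment (ν : Measure (EuclideanSpace ℝ ι)) : Matrix ι ι ℝ :=
  Matrix.of fun a b => ∫ φ, φ a * φ b ∂ν

variable {ν : Measure (EuclideanSpace ℝ ι)}

section

variable (h : Integrable (fun φ => ‖φ‖ ^ 2) ν)
include h

lemma integrable_apply_mul_apply (a b : ι) :
    Integrable (fun φ : EuclideanSpace ℝ ι => φ a * φ b) ν := by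
  refine h.mono' (by fun_prop) (ae_of_all _ fun φ => ?_)
  rw [norm_mul, sq]
  exact mul_le_mul (PiLp.norm_apply_le φ a) (PiLp.norm_apply_le φ b) (norm_nonneg _)
    (norm_nonneg _)

lemma integrable_dotProduct_mulVec (A : Matrix ι ι ℝ) :
    Integrable (fun φ : EuclideanSpace ℝ ι => φ ⬝ᵥ A *ᵥ φ) ν := by
  simp only [dotProduct_mulVec_self_eq_sum]
  exact integrable_finsetSum _ fun a _ => integrable_finsetSum _ fun b _ =>
    (integrable_apply_mul_apply h b a).const_mul _

lemma integral_dotProduct_mulVec (A : Matrix ι ι ℝ) :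
    ∫ φ, φ ⬝ᵥ A *ᵥ φ ∂ν = (A * secondMoment ν).trace := by
  have hterm (a b : ι) := (integrable_apply_mul_apply h b a).const_mul (A a b)
  simp only [dotProduct_mulVec_self_eq_sum]
  rw [integral_finsetSum _ fun a _ => integrable_finsetSum _ fun b _ => hterm a b]
  refine sum_congr rfl fun a _ => ?_
  rw [integral_finsetSum _ fun b _ => hterm a b]
  exact sum_congr rfl fun b _ => integral_const_mul _ _

lemma trace_secondMoment : (secondMoment ν).trace = ∫ φ, ‖φ‖ ^ 2 ∂ν := by
  simp only [trace, Matrix.diag, secondMoment, of_apply]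
  rw [← integral_finsetSum _ fun a _ => integrable_apply_mul_apply h a a]
  congr 1 with φ
  rw [EuclideanSpace.norm_sq_eq]
  simp [sq]

lemma posSemidef_secondMoment : (secondMoment ν).PosSemidef := by
  refine .of_dotProduct_mulVec_nonneg ?_ fun x => ?_
  · ext a b
    exact integral_congr_ae (ae_of_all _ fun φ => mul_comm _ _)
  · have := integral_dotProduct_mulVec h (vecMulVec x x)
    rw [vecMulVec_mul, trace_vecMulVec] at this
    rw [star_trivial, dotProduct_mulVec, dotProduct_comm, ← this]
    refine integral_nonneg fun φ => ?_
    simpa [vecMulVec_mulVec, dotProduct_comm] using mul_self_nonneg _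

lemma integral_sqrt_dotProduct_mulVec_le [IsProbabilityMeasure ν] {A : Matrix ι ι ℝ}
    (hA : A.PosSemidef) : ∫ φ, √(φ ⬝ᵥ A *ᵥ φ) ∂ν ≤ √((A * secondMoment ν).trace) := by
  rw [← integral_dotProduct_mulVec h]
  refine integral_sqrt_le_sqrt_integral (integrable_dotProduct_mulVec h A) (ae_of_all _ fun φ => ?_)
  simpa using hA.dotProduct_mulVec_nonneg φ

end

lemma integrable_norm_sq_of_ae_norm_le_one [IsFiniteMeasure ν] (hν : ∀ᵐ φ ∂ν, ‖φ‖ ≤ 1) :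
    Integrable (fun φ => ‖φ‖ ^ 2) ν := by
  refine .of_bound (by fun_prop) 1 ?_
  filter_upwards [hν] with φ hφ
  rw [norm_pow, norm_norm]
  exact pow_le_one₀ (norm_nonneg φ) hφ

lemma trace_secondMoment_le_one [IsProbabilityMeasure ν] (hν : ∀ᵐ φ ∂ν, ‖φ‖ ≤ 1) :
    (secondMoment ν).trace ≤ 1 := by
  rw [trace_secondMoment (integrable_norm_sq_of_ae_norm_le_one hν)]
  calc ∫ φ, ‖φ‖ ^ 2 ∂ν ≤ ∫ _, 1 ∂ν :=
        integral_mono_ae (integrable_norm_sq_of_ae_norm_le_one hν) (integrable_const 1) <| by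
          filter_upwards [hν] with φ hφ using pow_le_one₀ (norm_nonneg φ) hφ
    _ = 1 := by simp

end SecondMoment

theorem sum_integral_sqrt_inv_designMatrix_le [Fintype ι] [DecidableEq ι] [Nonempty ι]
    {c : ℝ} (hc : 1 ≤ c) {m : ℕ} {μ : ℕ → Measure (EuclideanSpace ℝ ι)}
    (hprob : ∀ j < m, IsProbabilityMeasure (μ j))
    (hball : ∀ j < m, ∀ᵐ φ ∂μ j, ‖φ‖ ≤ 1) :
    ∑ i ∈ range m, ∫ φ, √(φ ⬝ᵥ (designMatrix c (fun j => secondMoment (μ j)) i)⁻¹ *ᵥ φ) ∂μ i ≤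
      √(m * (2 * Fintype.card ι * Real.log (1 + m / (c * Fintype.card ι)))) := by
  set D := designMatrix c fun j => secondMoment (μ j)
  have hsq (j) (hj : j < m) := have := hprob j hj; integrable_norm_sq_of_ae_norm_le_one (hball j hj)
  have hM (j) (hj : j < m) := posSemidef_secondMoment (hsq j hj)
  have htr (j) (hj : j < m) := have := hprob j hj; trace_secondMoment_le_one (hball j hj)
  have hPD (i) (hi : i < m) : (D i).PosDef :=
    posDef_designMatrix (one_pos.trans_le hc) fun j hj => hM j (hj.trans hi)
  calc ∑ i ∈ range m, ∫ φ, √(φ ⬝ᵥ (D i)⁻¹ *ᵥ φ) ∂μ i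
      ≤ ∑ i ∈ range m, √((D i)⁻¹ * secondMoment (μ i)).trace :=
        sum_le_sum fun i hi => have := hprob i (mem_range.mp hi)
          integral_sqrt_dotProduct_mulVec_le (hsq i (mem_range.mp hi))
            (hPD i (mem_range.mp hi)).inv.posSemidef
    _ ≤ √(#(range m) * ∑ i ∈ range m, ((D i)⁻¹ * secondMoment (μ i)).trace) :=
        Real.sum_sqrt_le_sqrt_card_mul_sum fun i hi =>
          (hPD i (mem_range.mp hi)).trace_inv_mul_nonneg (hM i (mem_range.mp hi))
    _ ≤ _ := by
        rw [card_range]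
        gcongr
        exact sum_trace_inv_designMatrix_mul_le hc hM htr

/-- Elliptical-potential bound for expected covariance matrices: if `μ_0, …, μ_{m-1}`
are probability measures on the closed unit ball of `ℝ^d` and
`Σ_i = 2I + Σ_{j<i} ∫ φφᵀ dμ_j`, then
`Σ_{i<m} ∫ √(φᵀ Σ_i⁻¹ φ) dμ_i ≤ √(2 m d log(1 + m/d))`, and in particular the minimum
over `i < m` of `∫ √(φᵀ Σ_i⁻¹ φ) dμ_i` is at most `√(2 d log(1 + m/d) / m)`. -/
theorem expected_covariance_elliptical_potential
    (d m : ℕ) (hd : 0 < d) (hm : 0 < m)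
    (μ : ℕ → Measure (EuclideanSpace ℝ (Fin d)))
    (hprob : ∀ j < m, IsProbabilityMeasure (μ j))
    (hsupp : ∀ j < m, μ j {φ | ‖φ‖ ≤ 1} = 1)
    (Sig : ℕ → Matrix (Fin d) (Fin d) ℝ)
    (hSig : ∀ i, Sig i = (2 : ℝ) • (1 : Matrix (Fin d) (Fin d) ℝ) +
        ∑ j ∈ Finset.range i,
          Matrix.of (fun a b => ∫ φ, φ a * φ b ∂(μ j))) :
    (∑ i ∈ Finset.range m, ∫ φ, Real.sqrt (φ ⬝ᵥ ((Sig i)⁻¹).mulVec φ) ∂(μ i)) ≤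
        Real.sqrt (2 * m * d * Real.log (1 + (m : ℝ) / d)) ∧
      ∃ i < m, (∫ φ, Real.sqrt (φ ⬝ᵥ ((Sig i)⁻¹).mulVec φ) ∂(μ i)) ≤
        Real.sqrt (2 * d * Real.log (1 + (m : ℝ) / d) / m) := by
  have : Nonempty (Fin d) := ⟨⟨0, hd⟩⟩
  have hball (j) (hj : j < m) : ∀ᵐ φ ∂μ j, ‖φ‖ ≤ 1 :=
    have := hprob j hj
    (ae_iff_measure_eq (measurableSet_le (by fun_prop) (by fun_prop)).nullMeasurableSet).mpr
      (by simp [hsupp j hj])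
  have hsum : ∑ i ∈ range m, ∫ φ, √(φ ⬝ᵥ (Sig i)⁻¹ *ᵥ φ) ∂μ i ≤
      √(m * (2 * d * Real.log (1 + (m : ℝ) / d))) := by
    rw [show Sig = designMatrix 2 fun j => secondMoment (μ j) from funext hSig]
    refine (sum_integral_sqrt_inv_designMatrix_le one_le_two hprob hball).trans ?_
    have : (0 : ℝ) < d := by exact_mod_cast hd
    rw [Fintype.card_fin]
    gcongr
    linarith
  exact ⟨hsum.trans_eq (by ring_nf), exists_lt_le_sqrt_div_of_sum_range_le hm hsum⟩
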